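/- (Additivity of V_ℤ under disjoint union) Let K and K' be admissible d-complexes on disjoint finite vertex sets S and S', and let K ⊔ K' denote their disjoint union, an admissible d-complex on S ⊔ S' whose chain is K + K'. Then V_ℤ(K ⊔ K') = V_ℤ(K) + V_ℤ(K'). -/

import Mathlib

/-!
Framework: oriented simplicial chains on a finite vertex set.

An oriented `n`-simplex on a vertex set `V` is an `(n+1)`-tuple of distinct vertices
up to even permutation; an odd permutation yields the oppositely oriented simplex.
An `n`-chain with coefficients in `R` is encoded as an *alternating* function
`c : (Fin (n+1) → V) → R`: the value `c f` is the coefficient of the oriented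
simplex represented by the tuple `f`, and reversing orientation negates it.
-/

/-- `c` is an `n`-chain: it is alternating under permutations of the tuple
(so an oriented simplex and its orientation reversal are identified up to sign). -/
def IsAltChain {V : Type*} (n : ℕ) {R : Type*} [AddCommGroup R]
    (c : (Fin (n + 1) → V) → R) : Prop :=
  ∀ (σ : Equiv.Perm (Fin (n + 1))) (f : Fin (n + 1) → V),
    c (f ∘ σ) = (Equiv.Perm.sign σ : ℤ) • c f

/-- The boundary operator: `∂` sends `[v₀,…,vₙ]` to `Σᵢ (−1)ⁱ [v₀,…,v̂ᵢ,…,vₙ]`;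
in the alternating-function encoding this is `(∂c) g = Σ_{v} c (v ∷ g)`. -/
def bdry {V : Type*} [Fintype V] {n : ℕ} {R : Type*} [AddCommMonoid R]
    (c : (Fin (n + 1) → V) → R) : (Fin n → V) → R :=
  fun g => ∑ v : V, c (Fin.cons v g)

/-- 1-norm of an integral chain: sum of the absolute values of the coefficients,
one per oriented simplex (each simplex has `(n+1)!` tuple representatives). -/
noncomputable def normZ {V : Type*} [Fintype V] [DecidableEq V] {n : ℕ}
    (c : (Fin (n + 1) → V) → ℤ) : ℝ :=
  (∑ f : Fin (n + 1) → V, |(c f : ℝ)|) / (Nat.factorial (n + 1) : ℝ)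

/-- 1-norm of a rational chain. -/
noncomputable def normQ {V : Type*} [Fintype V] [DecidableEq V] {n : ℕ}
    (c : (Fin (n + 1) → V) → ℚ) : ℝ :=
  (∑ f : Fin (n + 1) → V, |(c f : ℝ)|) / (Nat.factorial (n + 1) : ℝ)

/-- An admissible `d`-complex on `V`: an integral `d`-chain in which every oriented
`d`-simplex appears with coefficient `0` or `1` (i.e. every tuple has coefficient
`-1`, `0` or `1`), and whose boundary vanishes. Its *facets* are the oriented
simplices (tuples) with coefficient `1`. -/
structure IsAdmissible {V : Type*} [Fintype V] (d : ℕ)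
    (K : (Fin (d + 1) → V) → ℤ) : Prop where
  chain : IsAltChain d K
  coeff : ∀ f, K f = -1 ∨ K f = 0 ∨ K f = 1
  closed : ∀ g, bdry K g = 0

/-- `V_ℤ(K)`: the minimum 1-norm of an integral `(d+1)`-chain `α` with `∂α = K`
(the minimum is attained, so it equals this infimum). -/
noncomputable def VZ {V : Type*} [Fintype V] [DecidableEq V] (d : ℕ)
    (K : (Fin (d + 1) → V) → ℤ) : ℝ :=
  sInf { x : ℝ | ∃ α : (Fin (d + 2) → V) → ℤ,
    IsAltChain (d + 1) α ∧ (∀ g, bdry α g = K g) ∧ x = normZ α }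

/-- `V_ℚ(K)`: the minimum 1-norm of a rational `(d+1)`-chain `α` with `∂α = K`
(the minimum is attained, so it equals this infimum). -/
noncomputable def VQ {V : Type*} [Fintype V] [DecidableEq V] (d : ℕ)
    (K : (Fin (d + 1) → V) → ℤ) : ℝ :=
  sInf { x : ℝ | ∃ α : (Fin (d + 2) → V) → ℚ,
    IsAltChain (d + 1) α ∧ (∀ g, bdry α g = (K g : ℚ)) ∧ x = normQ α }

/-- The unit-flux constraint: for every oriented `(d+1)`-simplex `t` on `V`,
the total flux through its oriented boundary facets is at most `1`. -/
def UnitFlux {V : Type*} (d : ℕ) (φ : (Fin (d + 1) → V) → ℝ) : Prop :=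
  ∀ t : Fin (d + 2) → V, Function.Injective t →
    ∑ i : Fin (d + 2), (-1 : ℝ) ^ (i : ℕ) * φ (t ∘ i.succAbove) ≤ 1

/-- `φ(F₁) + ⋯ + φ(Fₙ)`, the sum of a flux function over the facets of `K`
(each facet has `(d+1)!` tuple representatives `f`, on which `K f * φ f` agree). -/
noncomputable def fluxSum {V : Type*} [Fintype V] (d : ℕ)
    (φ : (Fin (d + 1) → V) → ℝ) (K : (Fin (d + 1) → V) → ℤ) : ℝ :=
  (∑ f : Fin (d + 1) → V, (K f : ℝ) * φ f) / (Nat.factorial (d + 1) : ℝ)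

/-- Pushforward of a chain along a map of vertex sets `q : V → W`
(simplices whose image is degenerate die). -/
def pushChain {V W : Type*} [Fintype V] [DecidableEq W] (q : V → W) {n : ℕ}
    {R : Type*} [AddCommMonoid R] (c : (Fin n → V) → R) : (Fin n → W) → R :=
  fun f => ∑ g : Fin n → V, if q ∘ g = f then c g else 0

/-- The chain consisting of the single oriented simplex `[s 0, …, s n]`. -/
def simplexChain {V : Type*} [DecidableEq V] {n : ℕ} (s : Fin (n + 1) → V) :
    (Fin (n + 1) → V) → ℤ :=
  fun f => ∑ σ : Equiv.Perm (Fin (n + 1)),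
    if f = s ∘ σ then (Equiv.Perm.sign σ : ℤ) else 0

/-- The chain of the disjoint union `K ⊔ K'` on `V ⊕ V'`: it is `K + K'`. -/
def unionChain {V V' : Type*} [Fintype V] [Fintype V'] [DecidableEq V] [DecidableEq V']
    {n : ℕ} (K : (Fin n → V) → ℤ) (K' : (Fin n → V') → ℤ) : (Fin n → V ⊕ V') → ℤ :=
  fun f => pushChain Sum.inl K f + pushChain Sum.inr K' f

/-- The chain of the connected sum `K # K'` on the glued vertex set `W`
(with gluing maps `j : V → W`, `j' : V' → W` identifying the facet `vF` of `K`
with the facet `vF'` of `K'`): the image of `K + K' − F − F'` under the gluing. -/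
def connSum {V V' W : Type*} [Fintype V] [Fintype V'] [DecidableEq V] [DecidableEq V']
    [DecidableEq W] {d : ℕ} (K : (Fin (d + 1) → V) → ℤ) (K' : (Fin (d + 1) → V') → ℤ)
    (vF : Fin (d + 1) → V) (vF' : Fin (d + 1) → V') (j : V → W) (j' : V' → W) :
    (Fin (d + 1) → W) → ℤ :=
  pushChain (Sum.elim j j')
    (fun g : Fin (d + 1) → V ⊕ V' =>
      pushChain Sum.inl K g + pushChain Sum.inr K' g
        - pushChain Sum.inl (simplexChain vF) g - pushChain Sum.inr (simplexChain vF') g)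

/-! ### Auxiliary lemmas -/

section Aux

open Finset

lemma comp_swap_eq {V : Type*} {n : ℕ} (f : Fin n → V) {i j : Fin n} (h : f i = f j) :
    f ∘ Equiv.swap i j = f := by
  funext k
  rcases eq_or_ne k i with rfl | hi
  · simpa [Equiv.swap_apply_left] using h.symm
  rcases eq_or_ne k j with rfl | hj
  · simpa [Equiv.swap_apply_right] using h
  · simp [Function.comp, Equiv.swap_apply_of_ne_of_ne hi hj]

lemma alt_eq_zero_of_not_injective {V : Type*} {n : ℕ} {c : (Fin (n + 1) → V) → ℤ}
    (hc : IsAltChain n c) {f : Fin (n + 1) → V} (hf : ¬ Function.Injective f) :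
    c f = 0 := by
  classical
  obtain ⟨i, j, hij, hne⟩ := Function.not_injective_iff.mp hf
  have h := hc (Equiv.swap i j) f
  rw [comp_swap_eq f hij, Equiv.Perm.sign_swap hne] at h
  simp only [Units.val_neg, Units.val_one, neg_smul, one_smul, smul_eq_mul, neg_mul,
    one_mul] at h
  omega

lemma alt_add {V : Type*} {n : ℕ} {c c' : (Fin (n + 1) → V) → ℤ}
    (hc : IsAltChain n c) (hc' : IsAltChain n c') :
    IsAltChain n (fun f => c f + c' f) := by
  intro σ f
  simp only [hc σ f, hc' σ f, smul_add]

lemma alt_zero {V : Type*} {n : ℕ} : IsAltChain n (fun _ : Fin (n + 1) → V => (0 : ℤ)) := by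
  intro σ f; simp

lemma pushChain_alt {V W : Type*} [Fintype V] [DecidableEq W] (q : V → W) {n : ℕ}
    {c : (Fin (n + 1) → V) → ℤ} (hc : IsAltChain n c) :
    IsAltChain n (pushChain q c) := by
  intro σ f
  unfold pushChain
  rw [Finset.smul_sum]
  apply Fintype.sum_equiv (Equiv.arrowCongr σ (Equiv.refl V))
  intro g
  have hg : Equiv.arrowCongr σ (Equiv.refl V) g = g ∘ σ.symm := rfl
  rw [hg]
  have key : (q ∘ (g ∘ σ.symm) = f) ↔ (q ∘ g = f ∘ σ) := by
    constructor <;> intro h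
    · funext x; have := congrFun h (σ x); simpa using this
    · funext x; have := congrFun h (σ.symm x); simpa using this
  by_cases hcond : q ∘ g = f ∘ σ
  · rw [if_pos hcond, if_pos (key.mpr hcond)]
    have := hc σ (g ∘ σ.symm)
    have hgs : (g ∘ σ.symm) ∘ σ = g := by funext x; simp
    rw [hgs] at this
    exact this
  · rw [if_neg hcond, if_neg (fun h => hcond (key.mp h))]
    simp

lemma comp_cons {V W : Type*} {n : ℕ} (q : V → W) (v : V) (g : Fin n → V) :
    q ∘ Fin.cons v g = Fin.cons (q v) (q ∘ g) := by
  funext j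
  refine Fin.cases ?_ ?_ j <;> simp

lemma pushChain_bdry {V W : Type*} [Fintype V] [Fintype W] [DecidableEq W] (q : V → W) {n : ℕ}
    (c : (Fin (n + 1) → V) → ℤ) :
    bdry (pushChain q c) = pushChain q (bdry c) := by
  classical
  funext h
  unfold bdry pushChain
  calc ∑ w : W, ∑ g : Fin (n + 1) → V, (if q ∘ g = Fin.cons w h then c g else 0)
      = ∑ w : W, ∑ p : V × (Fin n → V),
          (if q ∘ Fin.cons p.1 p.2 = Fin.cons w h then c (Fin.cons p.1 p.2) else 0) := by
        refine Finset.sum_congr rfl fun w _ => ?_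
        exact (Fintype.sum_equiv (Fin.consEquiv fun _ => V) _ _ (fun p => rfl)).symm
    _ = ∑ p : V × (Fin n → V), ∑ w : W,
          (if q ∘ Fin.cons p.1 p.2 = Fin.cons w h then c (Fin.cons p.1 p.2) else 0) :=
        Finset.sum_comm
    _ = ∑ p : V × (Fin n → V), (if q ∘ p.2 = h then c (Fin.cons p.1 p.2) else 0) := by
        refine Finset.sum_congr rfl fun p _ => ?_
        have hrw : ∀ w : W, (q ∘ Fin.cons p.1 p.2 = Fin.cons w h) ↔ (q p.1 = w ∧ q ∘ p.2 = h) := by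
          intro w
          rw [comp_cons]
          constructor
          · intro hh
            exact ⟨by simpa using congrFun hh 0, by funext j; simpa using congrFun hh j.succ⟩
          · rintro ⟨rfl, hh⟩; rw [hh]
        calc ∑ w : W, (if q ∘ Fin.cons p.1 p.2 = Fin.cons w h then c (Fin.cons p.1 p.2) else 0)
            = ∑ w : W, (if q p.1 = w ∧ q ∘ p.2 = h then c (Fin.cons p.1 p.2) else 0) := by
              refine Finset.sum_congr rfl fun w _ => if_congr (hrw w) rfl rfl
          _ = _ := by
              by_cases hB : q ∘ p.2 = h
              · simp [hB]
              · simp [hB]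
    _ = ∑ g : Fin n → V, ∑ v : V, (if q ∘ g = h then c (Fin.cons v g) else 0) :=
        Fintype.sum_prod_type_right _
    _ = ∑ g : Fin n → V, (if q ∘ g = h then ∑ v : V, c (Fin.cons v g) else 0) := by
        refine Finset.sum_congr rfl fun g _ => ?_
        by_cases hB : q ∘ g = h <;> simp [hB]

lemma pushChain_comp {V W X : Type*} [Fintype V] [Fintype W] [DecidableEq W] [DecidableEq X]
    (q : V → W) (r : W → X) {n : ℕ} (c : (Fin n → V) → ℤ) :
    pushChain (fun v => r (q v)) c = pushChain r (pushChain q c) := by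
  classical
  funext f
  unfold pushChain
  symm
  calc ∑ gW : Fin n → W, (if r ∘ gW = f then ∑ g : Fin n → V, if q ∘ g = gW then c g else 0 else 0)
      = ∑ gW : Fin n → W, ∑ g : Fin n → V,
          (if q ∘ g = gW then (if r ∘ gW = f then c g else 0) else 0) := by
        refine Finset.sum_congr rfl fun gW _ => ?_
        by_cases hr : r ∘ gW = f
        · simp [hr]
        · simp [hr]
    _ = ∑ g : Fin n → V, ∑ gW : Fin n → W,
          (if q ∘ g = gW then (if r ∘ gW = f then c g else 0) else 0) := Finset.sum_comm
    _ = ∑ g : Fin n → V, (if r ∘ (q ∘ g) = f then c g else 0) := by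
        refine Finset.sum_congr rfl fun g _ => ?_
        rw [Finset.sum_ite_eq]
        simp
    _ = ∑ g : Fin n → V, (if (fun v => r (q v)) ∘ g = f then c g else 0) := rfl

lemma pushChain_id {V : Type*} [Fintype V] [DecidableEq V] {n : ℕ} (c : (Fin n → V) → ℤ) :
    pushChain (fun v => v) c = c := by
  classical
  funext f
  unfold pushChain
  have : ∀ g : Fin n → V, (fun v : V => v) ∘ g = g := fun g => rfl
  simp only [this]
  simp [Finset.sum_ite_eq' Finset.univ f]

lemma pushChain_zero {V W : Type*} [Fintype V] [DecidableEq W] (q : V → W) {n : ℕ} :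
    pushChain q (fun _ : Fin n → V => (0 : ℤ)) = fun _ => 0 := by
  funext f; unfold pushChain; simp

lemma sum_abs_pushChain_inj {V W : Type*} [Fintype V] [Fintype W] [DecidableEq W] {q : V → W}
    (hq : Function.Injective q) {n : ℕ} (c : (Fin n → V) → ℤ) :
    ∑ f : Fin n → W, |pushChain q c f| = ∑ g : Fin n → V, |c g| := by
  classical
  have hcomp : Function.Injective (fun g : Fin n → V => q ∘ g) := fun g g' h => by
    funext i; exact hq (congrFun h i)
  calc ∑ f : Fin n → W, |pushChain q c f|
      = ∑ f : Fin n → W, ∑ g : Fin n → V, (if q ∘ g = f then |c g| else 0) := by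
        refine Finset.sum_congr rfl fun f _ => ?_
        unfold pushChain
        by_cases hex : ∃ g₀ : Fin n → V, q ∘ g₀ = f
        · obtain ⟨g₀, hg₀⟩ := hex
          have hz : ∀ g ∈ Finset.univ, g ≠ g₀ → (if q ∘ g = f then c g else 0) = 0 := by
            intro g _ hgne
            rw [if_neg]; intro hgf; exact hgne (hcomp (hgf.trans hg₀.symm))
          have hz' : ∀ g ∈ Finset.univ, g ≠ g₀ → (if q ∘ g = f then |c g| else 0) = 0 := by
            intro g _ hgne
            rw [if_neg]; intro hgf; exact hgne (hcomp (hgf.trans hg₀.symm))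
          rw [Finset.sum_eq_single g₀ hz (fun h => absurd (Finset.mem_univ g₀) h),
            Finset.sum_eq_single g₀ hz' (fun h => absurd (Finset.mem_univ g₀) h),
            if_pos hg₀, if_pos hg₀]
        · push_neg at hex
          rw [Finset.sum_eq_zero (fun g _ => by rw [if_neg (hex g)]),
            Finset.sum_eq_zero (fun g _ => by rw [if_neg (hex g)])]
          simp
    _ = ∑ g : Fin n → V, ∑ f : Fin n → W, (if q ∘ g = f then |c g| else 0) := Finset.sum_comm
    _ = ∑ g : Fin n → V, |c g| := by
        refine Finset.sum_congr rfl fun g _ => ?_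
        rw [Finset.sum_ite_eq]
        simp

lemma sum_abs_pushChain_le {V W : Type*} [Fintype V] [Fintype W] [DecidableEq V] [DecidableEq W]
    (q : V → W) {n : ℕ} {c : (Fin (n + 1) → V) → ℤ} (hc : IsAltChain n c) :
    ∑ f : Fin (n + 1) → W, |pushChain q c f| ≤
      ∑ g ∈ Finset.univ.filter (fun g : Fin (n + 1) → V => Function.Injective (q ∘ g)),
        |c g| := by
  classical
  calc ∑ f : Fin (n + 1) → W, |pushChain q c f|
      = ∑ f ∈ Finset.univ.filter (fun f : Fin (n + 1) → W => Function.Injective f),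
          |pushChain q c f| := by
        symm
        apply Finset.sum_subset (Finset.filter_subset _ _)
        intro f _ hf
        have : ¬ Function.Injective f := fun h =>
          hf (Finset.mem_filter.mpr ⟨Finset.mem_univ f, h⟩)
        rw [alt_eq_zero_of_not_injective (pushChain_alt q hc) this, abs_zero]
    _ ≤ ∑ f ∈ Finset.univ.filter (fun f : Fin (n + 1) → W => Function.Injective f),
          ∑ g : Fin (n + 1) → V, (if q ∘ g = f then |c g| else 0) := by
        apply Finset.sum_le_sum
        intro f _
        unfold pushChain
        refine (Finset.abs_sum_le_sum_abs _ _).trans (le_of_eq ?_)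
        refine Finset.sum_congr rfl fun g _ => ?_
        by_cases h : q ∘ g = f <;> simp [h]
    _ = ∑ g : Fin (n + 1) → V,
          ∑ f ∈ Finset.univ.filter (fun f : Fin (n + 1) → W => Function.Injective f),
            (if q ∘ g = f then |c g| else 0) := Finset.sum_comm
    _ = ∑ g : Fin (n + 1) → V, (if Function.Injective (q ∘ g) then |c g| else 0) := by
        refine Finset.sum_congr rfl fun g _ => ?_
        rw [Finset.sum_ite_eq]
        simp [Finset.mem_filter]
    _ = ∑ g ∈ Finset.univ.filter (fun g : Fin (n + 1) → V => Function.Injective (q ∘ g)),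
          |c g| := (Finset.sum_filter _ _).symm

lemma normZ_eq {V : Type*} [Fintype V] [DecidableEq V] {n : ℕ} (c : (Fin (n + 1) → V) → ℤ) :
    normZ c = ((∑ f : Fin (n + 1) → V, |c f| : ℤ) : ℝ) / (Nat.factorial (n + 1) : ℝ) := by
  unfold normZ
  congr 1
  rw [Int.cast_sum]
  exact Finset.sum_congr rfl fun f _ => (Int.cast_abs).symm

lemma normZ_nonneg {V : Type*} [Fintype V] [DecidableEq V] {n : ℕ}
    (c : (Fin (n + 1) → V) → ℤ) : 0 ≤ normZ c :=
  div_nonneg (Finset.sum_nonneg fun _ _ => abs_nonneg _) (Nat.cast_nonneg _)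

lemma VZ_le {V : Type*} [Fintype V] [DecidableEq V] {d : ℕ} {K : (Fin (d + 1) → V) → ℤ}
    {α : (Fin (d + 2) → V) → ℤ} (hα : IsAltChain (d + 1) α) (hb : ∀ g, bdry α g = K g) :
    VZ d K ≤ normZ α := by
  apply csInf_le
  · exact ⟨0, by rintro x ⟨β, h1, h2, rfl⟩; exact normZ_nonneg β⟩
  · exact ⟨α, hα, hb, rfl⟩

lemma le_VZ {V : Type*} [Fintype V] [DecidableEq V] {d : ℕ} {K : (Fin (d + 1) → V) → ℤ}
    {x : ℝ} (hne : ∃ α : (Fin (d + 2) → V) → ℤ, IsAltChain (d + 1) α ∧ ∀ g, bdry α g = K g)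
    (h : ∀ α : (Fin (d + 2) → V) → ℤ,
      IsAltChain (d + 1) α → (∀ g, bdry α g = K g) → x ≤ normZ α) :
    x ≤ VZ d K := by
  obtain ⟨α₀, h1, h2⟩ := hne
  refine le_csInf ⟨normZ α₀, ⟨α₀, h1, h2, rfl⟩⟩ ?_
  rintro y ⟨α, ha, hb, rfl⟩
  exact h α ha hb

lemma succAbove_factor {n : ℕ} (τ : Equiv.Perm (Fin (n + 1))) (i : Fin (n + 1)) :
    ∃ e : Equiv.Perm (Fin n), (∀ j, τ (i.succAbove j) = (τ i).succAbove (e j)) ∧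
      (Equiv.Perm.sign e : ℤ) =
        (-1) ^ (i : ℕ) * (-1) ^ ((τ i : Fin (n + 1)) : ℕ) * (Equiv.Perm.sign τ : ℤ) := by
  classical
  set μ : Equiv.Perm (Fin (n + 1)) := Fin.cycleRange (τ i) * τ * (Fin.cycleRange i)⁻¹ with hμdef
  have hμapp : ∀ x, μ x = Fin.cycleRange (τ i) (τ ((Fin.cycleRange i)⁻¹ x)) := fun x => rfl
  have hμ0 : μ 0 = 0 := by
    have h1 : (Fin.cycleRange i)⁻¹ 0 = i := by
      rw [Equiv.Perm.inv_def, Equiv.symm_apply_eq, Fin.cycleRange_self]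
    rw [hμapp, h1, Fin.cycleRange_self]
  set pe := Equiv.Perm.decomposeFin μ with hpedef
  have hμ : Equiv.Perm.decomposeFin.symm pe = μ := Equiv.symm_apply_apply _ μ
  have hp : pe.1 = 0 := by
    calc pe.1 = Equiv.Perm.decomposeFin.symm (pe.1, pe.2) 0 :=
          (Equiv.Perm.decomposeFin_symm_apply_zero _ _).symm
      _ = μ 0 := by rw [Prod.mk.eta, hμ]
      _ = 0 := hμ0
  have hsucc : ∀ j : Fin n, μ j.succ = (pe.2 j).succ := by
    intro j
    calc μ j.succ = Equiv.Perm.decomposeFin.symm (pe.1, pe.2) j.succ := by rw [Prod.mk.eta, hμ]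
      _ = Equiv.swap 0 pe.1 ((pe.2 j).succ) := Equiv.Perm.decomposeFin_symm_apply_succ _ _ _
      _ = (pe.2 j).succ := by rw [hp, Equiv.swap_self, Equiv.refl_apply]
  refine ⟨pe.2, fun j => ?_, ?_⟩
  · have h1 : i.succAbove j = (Fin.cycleRange i)⁻¹ j.succ := by
      rw [Equiv.Perm.inv_def, Equiv.eq_symm_apply]
      exact Fin.cycleRange_succAbove i j
    have h2 : Fin.cycleRange (τ i) (τ (i.succAbove j)) = (pe.2 j).succ := by
      rw [h1, ← hμapp]
      exact hsucc j
    have h3 : Fin.cycleRange (τ i) ((τ i).succAbove (pe.2 j)) = (pe.2 j).succ :=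
      Fin.cycleRange_succAbove _ _
    exact (Fin.cycleRange (τ i)).injective (h2.trans h3.symm)
  · have hs1 : Equiv.Perm.sign μ = Equiv.Perm.sign pe.2 := by
      calc Equiv.Perm.sign μ = Equiv.Perm.sign (Equiv.Perm.decomposeFin.symm (pe.1, pe.2)) := by
            rw [Prod.mk.eta, hμ]
        _ = (if pe.1 = 0 then 1 else -1) * Equiv.Perm.sign pe.2 :=
            Equiv.Perm.decomposeFin.symm_sign _ _
        _ = Equiv.Perm.sign pe.2 := by rw [if_pos hp, one_mul]
    have hs2 : Equiv.Perm.sign μ =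
        (-1) ^ ((τ i : Fin (n + 1)) : ℕ) * Equiv.Perm.sign τ * (-1) ^ (i : ℕ) := by
      rw [hμdef, map_mul, map_mul, map_inv, Fin.sign_cycleRange, Fin.sign_cycleRange]
      congr 1
    have hfin := congrArg (Units.val : ℤˣ → ℤ) (hs1.symm.trans hs2)
    simp only [Units.val_mul, Units.val_pow_eq_pow_val, Units.val_neg, Units.val_one] at hfin
    rw [hfin]; ring

lemma cons_comp_succ_succAbove {V : Type*} {d : ℕ} (w : V) (g : Fin (d + 1) → V)
    (q : Fin (d + 1)) :
    Fin.cons w g ∘ (Fin.succ q).succAbove = Fin.cons w (g ∘ q.succAbove) := by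
  funext j
  refine Fin.cases ?_ ?_ j
  · simp [Fin.succ_succAbove_zero]
  · intro k
    simp [Fin.succ_succAbove_succ]

set_option maxHeartbeats 1000000 in
lemma cons_comp_succAbove_zero {V : Type*} {d : ℕ} (w : V) (g : Fin (d + 1) → V) :
    Fin.cons w g ∘ (0 : Fin (d + 2)).succAbove = g := by
  rw [Fin.succAbove_zero]
  funext j
  simp

lemma cone_fill {V : Type*} [Fintype V] [DecidableEq V] {d : ℕ} (v₀ : V)
    {K : (Fin (d + 1) → V) → ℤ} (halt : IsAltChain d K) (hcl : ∀ g, bdry K g = 0) :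
    ∃ γ : (Fin (d + 2) → V) → ℤ, IsAltChain (d + 1) γ ∧ ∀ g, bdry γ g = K g := by
  classical
  refine ⟨fun f => ∑ i : Fin (d + 2),
    (-1) ^ (i : ℕ) * (if f i = v₀ then K (f ∘ i.succAbove) else 0), ?_, ?_⟩
  · intro τ f
    have key : ∀ i : Fin (d + 2),
        (-1 : ℤ) ^ (i : ℕ) * (if (f ∘ τ) i = v₀ then K ((f ∘ τ) ∘ i.succAbove) else 0)
        = (Equiv.Perm.sign τ : ℤ) *
          ((-1) ^ ((τ i : Fin (d + 2)) : ℕ) *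
            (if f (τ i) = v₀ then K (f ∘ (τ i).succAbove) else 0)) := by
      intro i
      obtain ⟨e, he, hsign⟩ := succAbove_factor τ i
      have hcomp : (f ∘ τ) ∘ i.succAbove = (f ∘ (τ i).succAbove) ∘ e := by
        funext j
        simp only [Function.comp_apply]
        rw [he j]
      rw [hcomp]
      have halt' := halt e (f ∘ (τ i).succAbove)
      rw [halt']
      by_cases hv : f (τ i) = v₀
      · have hfv : (f ∘ τ) i = v₀ := hv
        rw [if_pos hfv, if_pos hv, smul_eq_mul, hsign]
        have hone : (-1 : ℤ) ^ ((i : Fin (d + 2)) : ℕ) * (-1) ^ ((i : Fin (d + 2)) : ℕ) = 1 := by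
          rw [← mul_pow]; norm_num
        have hone' : (-1 : ℤ) ^ (((τ i) : Fin (d + 2)) : ℕ) *
            (-1) ^ (((τ i) : Fin (d + 2)) : ℕ) = 1 := by
          rw [← mul_pow]; norm_num
        linear_combination (-1 : ℤ) ^ ((τ i : Fin (d + 2)) : ℕ) * (Equiv.Perm.sign τ : ℤ) *
          K (f ∘ (τ i).succAbove) * hone
      · have hfv : ¬ (f ∘ τ) i = v₀ := hv
        rw [if_neg hfv, if_neg hv]
        simp
    calc ∑ i : Fin (d + 2),
        (-1 : ℤ) ^ (i : ℕ) * (if (f ∘ τ) i = v₀ then K ((f ∘ τ) ∘ i.succAbove) else 0)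
        = ∑ i : Fin (d + 2), (Equiv.Perm.sign τ : ℤ) *
            ((-1) ^ ((τ i : Fin (d + 2)) : ℕ) *
              (if f (τ i) = v₀ then K (f ∘ (τ i).succAbove) else 0)) :=
          Finset.sum_congr rfl fun i _ => key i
      _ = (Equiv.Perm.sign τ : ℤ) * ∑ i : Fin (d + 2),
            ((-1) ^ ((τ i : Fin (d + 2)) : ℕ) *
              (if f (τ i) = v₀ then K (f ∘ (τ i).succAbove) else 0)) := by
          rw [Finset.mul_sum]
      _ = (Equiv.Perm.sign τ : ℤ) * ∑ i : Fin (d + 2),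
            ((-1) ^ ((i : Fin (d + 2)) : ℕ) *
              (if f i = v₀ then K (f ∘ i.succAbove) else 0)) := by
          congr 1
          exact Equiv.sum_comp τ (fun x : Fin (d + 2) =>
            (-1 : ℤ) ^ ((x : Fin (d + 2)) : ℕ) * (if f x = v₀ then K (f ∘ x.succAbove) else 0))
      _ = (Equiv.Perm.sign τ : ℤ) • ∑ i : Fin (d + 2),
            ((-1) ^ ((i : Fin (d + 2)) : ℕ) *
              (if f i = v₀ then K (f ∘ i.succAbove) else 0)) := by
          rw [smul_eq_mul]
  · intro g
    unfold bdry
    beta_reduce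
    rw [Finset.sum_comm, Fin.sum_univ_succ]
    simp only [Fin.cons_zero, Fin.val_zero, pow_zero, one_mul, Fin.cons_succ, Fin.val_succ,
      cons_comp_succAbove_zero, cons_comp_succ_succAbove]
    rw [Finset.sum_ite_eq' Finset.univ v₀ (fun _ => K g)]
    simp only [Finset.mem_univ, if_true]
    have h2 : ∀ q : Fin (d + 1), (∑ w : V,
        (-1 : ℤ) ^ ((q : ℕ) + 1) * (if g q = v₀ then K (Fin.cons w (g ∘ q.succAbove)) else 0)) = 0 := by
      intro q
      by_cases hv : g q = v₀
      · simp only [if_pos hv]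
        rw [← Finset.mul_sum]
        have hb := hcl (g ∘ q.succAbove)
        unfold bdry at hb
        rw [hb, mul_zero]
      · simp [hv]
    rw [Finset.sum_eq_zero (fun q _ => h2 q), add_zero]

lemma sum_alt_eq_zero {V : Type*} [Fintype V] {n : ℕ} {c : (Fin (n + 2) → V) → ℤ}
    (hc : IsAltChain (n + 1) c) : ∑ g : Fin (n + 2) → V, c g = 0 := by
  classical
  have key : ∀ g : Fin (n + 2) → V, c (g ∘ Equiv.swap 0 1) = - c g := by
    intro g
    rw [hc (Equiv.swap 0 1) g, Equiv.Perm.sign_swap (by exact zero_ne_one)]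
    simp
  have h : ∑ g : Fin (n + 2) → V, c g = ∑ g : Fin (n + 2) → V, c (g ∘ Equiv.swap 0 1) := by
    apply Fintype.sum_equiv (Equiv.arrowCongr (Equiv.swap 0 1) (Equiv.refl V))
    intro g
    congr 1
    funext k
    simp
  rw [Finset.sum_congr rfl (fun g _ => key g)] at h
  rw [Finset.sum_neg_distrib] at h
  omega

lemma pushChain_const_eq_zero {V W : Type*} [Fintype V] [DecidableEq W] {n : ℕ}
    {c : (Fin (n + 2) → V) → ℤ} (hc : IsAltChain (n + 1) c) (w₀ : W) :
    pushChain (fun _ : V => w₀) c = fun _ => 0 := by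
  classical
  funext f
  unfold pushChain
  have hcond : ∀ g : Fin (n + 2) → V,
      ((fun _ : V => w₀) ∘ g = f) ↔ ((fun _ : Fin (n + 2) => w₀) = f) := fun g => Iff.rfl
  by_cases hf : (fun _ : Fin (n + 2) => w₀) = f
  · rw [Finset.sum_congr rfl (fun g _ => if_pos ((hcond g).mpr hf))]
    exact sum_alt_eq_zero hc
  · rw [Finset.sum_eq_zero (fun g _ => if_neg (fun h => hf ((hcond g).mp h)))]

lemma push_inl_inr_cases {V V' : Type*} [Fintype V] [Fintype V'] [DecidableEq V] [DecidableEq V'] {n : ℕ}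
    (K : (Fin (n + 1) → V) → ℤ) (K' : (Fin (n + 1) → V') → ℤ) (f : Fin (n + 1) → V ⊕ V') :
    pushChain Sum.inl K f = 0 ∨ pushChain Sum.inr K' f = 0 := by
  classical
  cases hf0 : f 0 with
  | inl v =>
    right
    apply Finset.sum_eq_zero
    intro g _
    rw [if_neg]
    intro h
    have h0 := congrFun h 0
    rw [hf0] at h0
    exact absurd h0 (by simp)
  | inr v' =>
    left
    apply Finset.sum_eq_zero
    intro g _
    rw [if_neg]
    intro h
    have h0 := congrFun h 0
    rw [hf0] at h0
    exact absurd h0 (by simp)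

lemma pushChain_add {V W : Type*} [Fintype V] [DecidableEq W] (q : V → W) {n : ℕ}
    (a b : (Fin n → V) → ℤ) :
    pushChain q (fun g => a g + b g) = fun f => pushChain q a f + pushChain q b f := by
  classical
  funext f
  unfold pushChain
  rw [← Finset.sum_add_distrib]
  refine Finset.sum_congr rfl fun g _ => ?_
  by_cases h : q ∘ g = f <;> simp [h]

lemma VZ_push_bij {V W : Type*} [Fintype V] [DecidableEq V] [Fintype W] [DecidableEq W]
    (d : ℕ) {q : V → W} (hq : Function.Bijective q) (K : (Fin (d + 1) → V) → ℤ) :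
    VZ d (pushChain q K) = VZ d K := by
  classical
  obtain ⟨r, hrq, hqr⟩ := Function.bijective_iff_has_inverse.mp hq
  have hrinj : Function.Injective r := fun a b h => by rw [← hqr a, ← hqr b, h]
  unfold VZ
  congr 1
  ext x
  simp only [Set.mem_setOf_eq]
  constructor
  · rintro ⟨A, hA, hb, rfl⟩
    refine ⟨pushChain r A, pushChain_alt r hA, ?_, ?_⟩
    · intro g
      have h1 : bdry (pushChain r A) = pushChain r (bdry A) := pushChain_bdry r A
      have h2 : bdry A = pushChain q K := funext hb
      have h3 : (fun v : V => r (q v)) = fun v => v := funext hrq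
      rw [h1, h2, ← pushChain_comp, h3, pushChain_id]
    · rw [normZ_eq, normZ_eq, sum_abs_pushChain_inj hrinj]
  · rintro ⟨α, hα, hb, rfl⟩
    refine ⟨pushChain q α, pushChain_alt q hα, ?_, ?_⟩
    · intro g
      have h1 : bdry (pushChain q α) = pushChain q (bdry α) := pushChain_bdry q α
      have h2 : bdry α = K := funext hb
      rw [h1, h2]
    · rw [normZ_eq, normZ_eq, sum_abs_pushChain_inj hq.injective]

lemma fin2_eq_iff {V : Type*} (f : Fin 2 → V) (x y : V) :
    f = ![x, y] ↔ f 0 = x ∧ f 1 = y := by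
  constructor
  · rintro rfl; exact ⟨rfl, rfl⟩
  · rintro ⟨h0, h1⟩
    funext j
    fin_cases j
    · exact h0
    · exact h1

lemma fin1_eq_iff {V : Type*} (f g : Fin 1 → V) : f = g ↔ f 0 = g 0 := by
  constructor
  · rintro rfl; rfl
  · intro h; funext j; fin_cases j; exact h

lemma VZ_zero_eq {V : Type*} [Fintype V] [DecidableEq V] (K : (Fin 1 → V) → ℤ)
    (hco : ∀ f, K f = -1 ∨ K f = 0 ∨ K f = 1) (hcl : ∀ g : Fin 0 → V, bdry K g = 0) :
    VZ 0 K = ((∑ f : Fin 1 → V, |K f| : ℤ) : ℝ) / 2 := by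
  classical
  set A : Finset (Fin 1 → V) := Finset.univ.filter (fun g => K g = 1) with hA
  set B : Finset (Fin 1 → V) := Finset.univ.filter (fun g => K g = -1) with hB
  have hsum : ∑ g : Fin 1 → V, K g = 0 := by
    have hb := hcl (fun i => i.elim0)
    unfold bdry at hb
    rw [← hb]
    symm
    apply Fintype.sum_equiv (Equiv.funUnique (Fin 1) V).symm
    intro v
    congr 1
    funext j
    fin_cases j
    simp [Equiv.funUnique]
  have hcard : A.card = B.card := by
    have h1 : ∀ g : Fin 1 → V,
        K g = (if K g = 1 then (1 : ℤ) else 0) - (if K g = -1 then 1 else 0) := by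
      intro g; rcases hco g with h | h | h <;> rw [h] <;> norm_num
    rw [Finset.sum_congr rfl (fun g _ => h1 g), Finset.sum_sub_distrib,
      Finset.sum_boole, Finset.sum_boole] at hsum
    have h2 := sub_eq_zero.mp hsum
    exact_mod_cast h2
  set e := Finset.equivOfCardEq hcard with he
  set α₀ : (Fin 2 → V) → ℤ := fun f => ∑ a : {x // x ∈ A},
    ((if f = ![(↑(e a) : Fin 1 → V) 0, (↑a : Fin 1 → V) 0] then (1 : ℤ) else 0)
      - (if f = ![(↑a : Fin 1 → V) 0, (↑(e a) : Fin 1 → V) 0] then 1 else 0)) with hα₀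
  have halt : IsAltChain 1 α₀ := by
    intro σ f
    have hσ : σ = 1 ∨ σ = Equiv.swap 0 1 := by revert σ; decide
    rcases hσ with rfl | rfl
    · simp
    · rw [Equiv.Perm.sign_swap (by decide)]
      simp only [Units.val_neg, Units.val_one, neg_smul, one_smul]
      have hswap : ∀ x y : V, (f ∘ (Equiv.swap (0 : Fin 2) 1) = ![x, y]) ↔ f = ![y, x] := by
        intro x y
        rw [fin2_eq_iff, fin2_eq_iff]
        simp only [Function.comp_apply, Equiv.swap_apply_left, Equiv.swap_apply_right]
        exact and_comm
      rw [hα₀]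
      simp only
      rw [Finset.sum_congr rfl (fun a _ => by
        rw [if_congr (hswap _ _) rfl rfl, if_congr (hswap _ _) rfl rfl])]
      rw [← Finset.sum_neg_distrib]
      exact Finset.sum_congr rfl fun a _ => (neg_sub _ _).symm
  have hbdry : ∀ g, bdry α₀ g = K g := by
    intro g
    unfold bdry
    rw [hα₀]
    simp only
    rw [Finset.sum_comm]
    have hsum1 : ∀ x y : V,
        (∑ v : V, (if Fin.cons v g = ![x, y] then (1 : ℤ) else 0)) =
          (if g 0 = y then 1 else 0) := by
      intro x y
      have hc : ∀ v, (Fin.cons v g = ![x, y]) ↔ (v = x ∧ g 0 = y) := by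
        intro v
        rw [fin2_eq_iff]
        simp
      rw [Finset.sum_congr rfl (fun v _ => if_congr (hc v) rfl rfl)]
      by_cases hy : g 0 = y
      · simp [hy]
      · simp [hy]
    have hterm : ∀ a : {x // x ∈ A}, (∑ v : V,
        ((if Fin.cons v g = ![(↑(e a) : Fin 1 → V) 0, (↑a : Fin 1 → V) 0] then (1 : ℤ) else 0)
          - (if Fin.cons v g = ![(↑a : Fin 1 → V) 0, (↑(e a) : Fin 1 → V) 0] then 1 else 0))) =
        (if g 0 = (↑a : Fin 1 → V) 0 then 1 else 0)
          - (if g 0 = (↑(e a) : Fin 1 → V) 0 then 1 else 0) := by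
      intro a
      rw [Finset.sum_sub_distrib, hsum1, hsum1]
    rw [Finset.sum_congr rfl (fun a _ => hterm a), Finset.sum_sub_distrib]
    have h1 : (∑ a : {x // x ∈ A}, if g 0 = (↑a : Fin 1 → V) 0 then (1 : ℤ) else 0) =
        if g ∈ A then 1 else 0 := by
      have hcg : (∑ a : {x // x ∈ A}, if g 0 = (↑a : Fin 1 → V) 0 then (1 : ℤ) else 0)
          = ∑ a : {x // x ∈ A}, if g = (↑a : Fin 1 → V) then (1 : ℤ) else 0 :=
        Finset.sum_congr rfl (fun a _ => if_congr ((fin1_eq_iff g ↑a).symm) rfl rfl)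
      rw [hcg, Finset.sum_coe_sort A (fun x => if g = x then (1 : ℤ) else 0),
        Finset.sum_ite_eq A g (fun _ => (1 : ℤ))]
    have h2 : (∑ a : {x // x ∈ A}, if g 0 = (↑(e a) : Fin 1 → V) 0 then (1 : ℤ) else 0) =
        if g ∈ B then 1 else 0 := by
      have hcg : (∑ a : {x // x ∈ A}, if g 0 = (↑(e a) : Fin 1 → V) 0 then (1 : ℤ) else 0)
          = ∑ a : {x // x ∈ A}, if g = (↑(e a) : Fin 1 → V) then (1 : ℤ) else 0 :=
        Finset.sum_congr rfl (fun a _ => if_congr ((fin1_eq_iff g ↑(e a)).symm) rfl rfl)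
      rw [hcg, Fintype.sum_equiv e (fun a => if g = ↑(e a) then (1 : ℤ) else 0)
        (fun b => if g = ↑b then (1 : ℤ) else 0) (fun a => rfl),
        Finset.sum_coe_sort B (fun x => if g = x then (1 : ℤ) else 0),
        Finset.sum_ite_eq B g (fun _ => (1 : ℤ))]
    rw [h1, h2]
    rcases hco g with h | h | h
    · have hgA : g ∉ A := by simp [hA, Finset.mem_filter, h]
      have hgB : g ∈ B := by simp [hB, Finset.mem_filter, h]
      simp [hgA, hgB, h]
    · have hgA : g ∉ A := by simp [hA, Finset.mem_filter, h]
      have hgB : g ∉ B := by simp [hB, Finset.mem_filter, h]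
      simp [hgA, hgB, h]
    · have hgA : g ∈ A := by simp [hA, Finset.mem_filter, h]
      have hgB : g ∉ B := by simp [hB, Finset.mem_filter, h]
      simp [hgA, hgB, h]
  have habsK : ∑ g : Fin 1 → V, |K g| = (A.card : ℤ) + (B.card : ℤ) := by
    have h1 : ∀ g : Fin 1 → V,
        |K g| = (if K g = 1 then (1 : ℤ) else 0) + (if K g = -1 then 1 else 0) := by
      intro g; rcases hco g with h | h | h <;> rw [h] <;> norm_num
    rw [Finset.sum_congr rfl (fun g _ => h1 g), Finset.sum_add_distrib,
      Finset.sum_boole, Finset.sum_boole]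
  have hfact : ((Nat.factorial 2 : ℕ) : ℝ) = 2 := by norm_num [Nat.factorial]
  apply le_antisymm
  · refine (VZ_le halt hbdry).trans ?_
    rw [normZ_eq, hfact]
    rw [div_le_div_iff_of_pos_right (by norm_num : (0 : ℝ) < 2)]
    have hnum : ∑ f : Fin 2 → V, |α₀ f| ≤ ∑ g : Fin 1 → V, |K g| := by
      calc ∑ f : Fin 2 → V, |α₀ f|
          ≤ ∑ f : Fin 2 → V, ∑ a : {x // x ∈ A},
            ((if f = ![(↑(e a) : Fin 1 → V) 0, (↑a : Fin 1 → V) 0] then (1 : ℤ) else 0)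
              + (if f = ![(↑a : Fin 1 → V) 0, (↑(e a) : Fin 1 → V) 0] then 1 else 0)) := by
            apply Finset.sum_le_sum
            intro f _
            rw [hα₀]
            simp only
            refine (Finset.abs_sum_le_sum_abs _ _).trans ?_
            apply Finset.sum_le_sum
            intro a _
            refine (abs_sub _ _).trans ?_
            apply add_le_add <;>
              · exact le_of_eq (by split_ifs <;> simp)
        _ = ∑ a : {x // x ∈ A}, ∑ f : Fin 2 → V,
            ((if f = ![(↑(e a) : Fin 1 → V) 0, (↑a : Fin 1 → V) 0] then (1 : ℤ) else 0)
              + (if f = ![(↑a : Fin 1 → V) 0, (↑(e a) : Fin 1 → V) 0] then 1 else 0)) :=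
            Finset.sum_comm
        _ = ∑ a : {x // x ∈ A}, (2 : ℤ) := by
            refine Finset.sum_congr rfl fun a _ => ?_
            rw [Finset.sum_add_distrib, Finset.sum_ite_eq' Finset.univ _ (fun _ => (1 : ℤ)),
              Finset.sum_ite_eq' Finset.univ _ (fun _ => (1 : ℤ))]
            simp
        _ = (A.card : ℤ) + (A.card : ℤ) := by
            rw [Finset.sum_const, Finset.card_univ, Fintype.card_coe]
            ring
        _ = ∑ g : Fin 1 → V, |K g| := by rw [habsK, hcard]
    exact_mod_cast hnum
  · refine le_VZ ⟨α₀, halt, hbdry⟩ (fun α ha hb => ?_)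
    rw [normZ_eq, hfact]
    rw [div_le_div_iff_of_pos_right (by norm_num : (0 : ℝ) < 2)]
    have hnum : ∑ g : Fin 1 → V, |K g| ≤ ∑ f : Fin 2 → V, |α f| := by
      calc ∑ g : Fin 1 → V, |K g|
          = ∑ g : Fin 1 → V, |∑ v : V, α (Fin.cons v g)| := by
            refine Finset.sum_congr rfl fun g _ => ?_
            rw [← hb g]
            rfl
        _ ≤ ∑ g : Fin 1 → V, ∑ v : V, |α (Fin.cons v g)| :=
            Finset.sum_le_sum fun g _ => Finset.abs_sum_le_sum_abs _ _
        _ = ∑ p : V × (Fin 1 → V), |α (Fin.cons p.1 p.2)| :=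
            (Fintype.sum_prod_type_right
              (fun p : V × (Fin 1 → V) => |α (Fin.cons p.1 p.2)|)).symm
        _ = ∑ f : Fin 2 → V, |α f| :=
            Fintype.sum_equiv (Fin.consEquiv fun _ => V)
              (fun p : V × (Fin 1 → V) => |α (Fin.cons p.1 p.2)|) (fun f => |α f|)
              (fun p => rfl)
    exact_mod_cast hnum

lemma bdry_add {V : Type*} [Fintype V] {n : ℕ} (a b : (Fin (n + 1) → V) → ℤ) :
    bdry (fun f => a f + b f) = fun g => bdry a g + bdry b g := by
  funext g
  unfold bdry
  exact Finset.sum_add_distrib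

lemma pushChain_mem_of_inj {V W : Type*} [Fintype V] [DecidableEq W] {q : V → W}
    (hq : Function.Injective q) {n : ℕ} (c : (Fin n → V) → ℤ) (f : Fin n → W) :
    pushChain q c f = 0 ∨ ∃ g, pushChain q c f = c g := by
  classical
  have hcomp : Function.Injective (fun g : Fin n → V => q ∘ g) := fun g g' h => by
    funext i; exact hq (congrFun h i)
  by_cases hex : ∃ g₀ : Fin n → V, q ∘ g₀ = f
  · obtain ⟨g₀, hg₀⟩ := hex
    refine Or.inr ⟨g₀, ?_⟩
    unfold pushChain
    rw [Finset.sum_eq_single g₀ (fun g _ hgne => by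
        rw [if_neg]; intro hgf; exact hgne (hcomp (hgf.trans hg₀.symm)))
      (fun h => absurd (Finset.mem_univ g₀) h), if_pos hg₀]
  · push_neg at hex
    exact Or.inl (Finset.sum_eq_zero fun g _ => if_neg (hex g))

lemma combine_fill {V V' : Type*} [Fintype V] [Fintype V'] [DecidableEq V] [DecidableEq V']
    {d : ℕ} {K : (Fin (d + 1) → V) → ℤ} {K' : (Fin (d + 1) → V') → ℤ}
    {α : (Fin (d + 2) → V) → ℤ} {α' : (Fin (d + 2) → V') → ℤ}
    (ha : IsAltChain (d + 1) α) (ha' : IsAltChain (d + 1) α')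
    (hb : ∀ g, bdry α g = K g) (hb' : ∀ g, bdry α' g = K' g) :
    IsAltChain (d + 1) (fun f => pushChain Sum.inl α f + pushChain Sum.inr α' f) ∧
    (∀ g, bdry (fun f : Fin (d + 2) → V ⊕ V' =>
        pushChain Sum.inl α f + pushChain Sum.inr α' f) g = unionChain K K' g) ∧
    normZ (fun f => pushChain Sum.inl α f + pushChain Sum.inr α' f) = normZ α + normZ α' := by
  classical
  refine ⟨alt_add (pushChain_alt _ ha) (pushChain_alt _ ha'), ?_, ?_⟩
  · intro g
    have h := congrFun (bdry_add (pushChain Sum.inl α) (pushChain Sum.inr α')) g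
    rw [h, congrFun (pushChain_bdry Sum.inl α) g, congrFun (pushChain_bdry Sum.inr α') g]
    have h1 : bdry α = K := funext hb
    have h2 : bdry α' = K' := funext hb'
    rw [h1, h2]
    rfl
  · rw [normZ_eq, normZ_eq, normZ_eq]
    have hsplit : (∑ f : Fin (d + 2) → V ⊕ V',
        |pushChain Sum.inl α f + pushChain Sum.inr α' f|) =
        (∑ f : Fin (d + 2) → V ⊕ V', |pushChain Sum.inl α f|) +
          ∑ f : Fin (d + 2) → V ⊕ V', |pushChain Sum.inr α' f| := by
      rw [← Finset.sum_add_distrib]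
      refine Finset.sum_congr rfl fun f _ => ?_
      rcases push_inl_inr_cases α α' f with h0 | h0 <;> rw [h0] <;> simp
    rw [hsplit, sum_abs_pushChain_inj Sum.inl_injective, sum_abs_pushChain_inj Sum.inr_injective]
    push_cast
    ring

lemma collapse_left {V V' : Type*} [Fintype V] [Fintype V'] [DecidableEq V] [DecidableEq V']
    {e : ℕ} (v₀ : V) (K : (Fin (e + 2) → V) → ℤ) {K' : (Fin (e + 2) → V') → ℤ}
    (hK' : IsAltChain (e + 1) K') :
    pushChain (Sum.elim id (fun _ => v₀) : V ⊕ V' → V) (unionChain K K') = K := by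
  classical
  have hrw : unionChain K K' =
      fun f => pushChain Sum.inl K f + pushChain Sum.inr K' f := rfl
  rw [hrw, pushChain_add, funext_iff]
  intro f
  rw [← pushChain_comp, ← pushChain_comp]
  have hid : (fun v : V => (Sum.elim id (fun _ => v₀) : V ⊕ V' → V) (Sum.inl v)) =
      fun v => v := rfl
  have hconst : (fun v' : V' => (Sum.elim id (fun _ => v₀) : V ⊕ V' → V) (Sum.inr v')) =
      fun _ => v₀ := rfl
  rw [hid, hconst, pushChain_id, pushChain_const_eq_zero hK' v₀]
  simp

lemma collapse_right {V V' : Type*} [Fintype V] [Fintype V'] [DecidableEq V] [DecidableEq V']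
    {e : ℕ} (v₀' : V') {K : (Fin (e + 2) → V) → ℤ} (hK : IsAltChain (e + 1) K)
    (K' : (Fin (e + 2) → V') → ℤ) :
    pushChain (Sum.elim (fun _ => v₀') id : V ⊕ V' → V') (unionChain K K') = K' := by
  classical
  have hrw : unionChain K K' =
      fun f => pushChain Sum.inl K f + pushChain Sum.inr K' f := rfl
  rw [hrw, pushChain_add, funext_iff]
  intro f
  rw [← pushChain_comp, ← pushChain_comp]
  have hconst : (fun v : V => (Sum.elim (fun _ => v₀') id : V ⊕ V' → V') (Sum.inl v)) =
      fun _ => v₀' := rfl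
  have hid : (fun v' : V' => (Sum.elim (fun _ => v₀') id : V ⊕ V' → V') (Sum.inr v')) =
      fun v' => v' := rfl
  rw [hid, hconst, pushChain_id, pushChain_const_eq_zero hK v₀']
  simp

end Aux

/-- Additivity of `V_ℤ` under disjoint union. -/
theorem stmt7 {V V' : Type*} [Fintype V] [DecidableEq V]
    [Fintype V'] [DecidableEq V'] (d : ℕ)
    (K : (Fin (d + 1) → V) → ℤ) (K' : (Fin (d + 1) → V') → ℤ)
    (hK : IsAdmissible d K) (hK' : IsAdmissible d K') :
    VZ d (unionChain K K') = VZ d K + VZ d K' := by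
  classical
  rcases d with _ | e
  · -- dimension 0 : use the explicit formula `V_ℤ(K) = |K|₁ / 2`
    have hbi : bdry (pushChain (Sum.inl : V → V ⊕ V') K) = fun _ => 0 := by
      rw [pushChain_bdry]
      have h : bdry K = fun _ => (0 : ℤ) := funext hK.closed
      rw [h, pushChain_zero]
    have hbi' : bdry (pushChain (Sum.inr : V' → V ⊕ V') K') = fun _ => 0 := by
      rw [pushChain_bdry]
      have h : bdry K' = fun _ => (0 : ℤ) := funext hK'.closed
      rw [h, pushChain_zero]
    have hUcl : ∀ g : Fin 0 → V ⊕ V', bdry (unionChain K K') g = 0 := by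
      intro g
      have h : bdry (unionChain K K') g =
          bdry (pushChain Sum.inl K) g + bdry (pushChain Sum.inr K') g :=
        congrFun (bdry_add (pushChain Sum.inl K) (pushChain Sum.inr K')) g
      rw [h, congrFun hbi g, congrFun hbi' g, add_zero]
    have hUco : ∀ f, unionChain K K' f = -1 ∨ unionChain K K' f = 0 ∨ unionChain K K' f = 1 := by
      intro f
      unfold unionChain
      rcases push_inl_inr_cases K K' f with h0 | h0
      · rw [h0, zero_add]
        rcases pushChain_mem_of_inj Sum.inr_injective K' f with h1 | ⟨g, h1⟩
        · rw [h1]; exact Or.inr (Or.inl rfl)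
        · rw [h1]; exact hK'.coeff g
      · rw [h0, add_zero]
        rcases pushChain_mem_of_inj Sum.inl_injective K f with h1 | ⟨g, h1⟩
        · rw [h1]; exact Or.inr (Or.inl rfl)
        · rw [h1]; exact hK.coeff g
    have hUnorm : (∑ f : Fin 1 → V ⊕ V', |unionChain K K' f|) =
        (∑ g : Fin 1 → V, |K g|) + ∑ g : Fin 1 → V', |K' g| := by
      unfold unionChain
      calc ∑ f : Fin 1 → V ⊕ V', |pushChain Sum.inl K f + pushChain Sum.inr K' f|
          = ∑ f : Fin 1 → V ⊕ V', (|pushChain Sum.inl K f| + |pushChain Sum.inr K' f|) := by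
            refine Finset.sum_congr rfl fun f _ => ?_
            rcases push_inl_inr_cases K K' f with h0 | h0 <;> rw [h0] <;> simp
        _ = (∑ f : Fin 1 → V ⊕ V', |pushChain Sum.inl K f|) +
              ∑ f : Fin 1 → V ⊕ V', |pushChain Sum.inr K' f| := Finset.sum_add_distrib
        _ = _ := by
            rw [sum_abs_pushChain_inj Sum.inl_injective,
              sum_abs_pushChain_inj Sum.inr_injective]
    rw [VZ_zero_eq (unionChain K K') hUco hUcl, VZ_zero_eq K hK.coeff hK.closed,
      VZ_zero_eq K' hK'.coeff hK'.closed, hUnorm]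
    push_cast
    ring
  · -- dimension `e + 1`
    rcases isEmpty_or_nonempty V with hV | hV
    · -- `V` is empty
      have hzero : ∀ g : Fin (e + 2) → V,
          bdry (fun _ : Fin (e + 3) → V => (0 : ℤ)) g = K g :=
        fun g => (hV.false (g 0)).elim
      have hK0 : VZ (e + 1) K = 0 := by
        apply le_antisymm
        · refine (VZ_le alt_zero hzero).trans (le_of_eq ?_)
          unfold normZ
          simp
        · exact le_VZ ⟨_, alt_zero, hzero⟩ (fun α _ _ => normZ_nonneg α)
      haveI : IsEmpty (Fin (e + 2) → V) := ⟨fun g => hV.false (g 0)⟩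
      have hU : unionChain K K' = pushChain (Sum.inr : V' → V ⊕ V') K' := by
        funext f
        unfold unionChain
        have h0 : pushChain (Sum.inl : V → V ⊕ V') K f = 0 := by
          unfold pushChain
          rw [Finset.univ_eq_empty, Finset.sum_empty]
        rw [h0, zero_add]
      have hbij : Function.Bijective (Sum.inr : V' → V ⊕ V') := by
        refine ⟨Sum.inr_injective, fun x => ?_⟩
        cases x with
        | inl v => exact (hV.false v).elim
        | inr w => exact ⟨w, rfl⟩
      rw [hU, VZ_push_bij _ hbij, hK0, zero_add]
    rcases isEmpty_or_nonempty V' with hV' | hV'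
    · -- `V'` is empty
      have hzero : ∀ g : Fin (e + 2) → V',
          bdry (fun _ : Fin (e + 3) → V' => (0 : ℤ)) g = K' g :=
        fun g => (hV'.false (g 0)).elim
      have hK0 : VZ (e + 1) K' = 0 := by
        apply le_antisymm
        · refine (VZ_le alt_zero hzero).trans (le_of_eq ?_)
          unfold normZ
          simp
        · exact le_VZ ⟨_, alt_zero, hzero⟩ (fun α _ _ => normZ_nonneg α)
      haveI : IsEmpty (Fin (e + 2) → V') := ⟨fun g => hV'.false (g 0)⟩
      have hU : unionChain K K' = pushChain (Sum.inl : V → V ⊕ V') K := by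
        funext f
        unfold unionChain
        have h0 : pushChain (Sum.inr : V' → V ⊕ V') K' f = 0 := by
          unfold pushChain
          rw [Finset.univ_eq_empty, Finset.sum_empty]
        rw [h0, add_zero]
      have hbij : Function.Bijective (Sum.inl : V → V ⊕ V') := by
        refine ⟨Sum.inl_injective, fun x => ?_⟩
        cases x with
        | inl v => exact ⟨v, rfl⟩
        | inr w => exact (hV'.false w).elim
      rw [hU, VZ_push_bij _ hbij, hK0, add_zero]
    -- both vertex sets nonempty
    obtain ⟨v₀⟩ := hV
    obtain ⟨v₀'⟩ := hV'
    obtain ⟨γ, hγa, hγb⟩ := cone_fill v₀ hK.chain hK.closed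
    obtain ⟨γ', hγa', hγb'⟩ := cone_fill v₀' hK'.chain hK'.closed
    apply le_antisymm
    · -- upper bound
      have step1 : ∀ α : (Fin (e + 3) → V) → ℤ, IsAltChain (e + 2) α →
          (∀ g, bdry α g = K g) →
          VZ (e + 1) (unionChain K K') - normZ α ≤ VZ (e + 1) K' := by
        intro α ha hb
        apply le_VZ ⟨γ', hγa', hγb'⟩
        intro α' ha' hb'
        obtain ⟨hca, hcb, hcn⟩ := combine_fill ha ha' hb hb'
        have h := VZ_le hca hcb
        rw [hcn] at h
        linarith
      have step2 : VZ (e + 1) (unionChain K K') - VZ (e + 1) K' ≤ VZ (e + 1) K := by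
        apply le_VZ ⟨γ, hγa, hγb⟩
        intro α ha hb
        linarith [step1 α ha hb]
      linarith
    · -- lower bound via the two collapse maps
      obtain ⟨hΓa, hΓb, hΓn⟩ := combine_fill hγa hγa' hγb hγb'
      apply le_VZ ⟨_, hΓa, hΓb⟩
      intro α ha hb
      set p : V ⊕ V' → V := Sum.elim id (fun _ => v₀) with hp
      set p' : V ⊕ V' → V' := Sum.elim (fun _ => v₀') id with hp'
      have hβb : ∀ g, bdry (pushChain p α) g = K g := by
        intro g
        rw [congrFun (pushChain_bdry p α) g]
        have h2 : bdry α = unionChain K K' := funext hb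
        rw [h2, collapse_left v₀ K hK'.chain]
      have hβ'b : ∀ g, bdry (pushChain p' α) g = K' g := by
        intro g
        rw [congrFun (pushChain_bdry p' α) g]
        have h2 : bdry α = unionChain K K' := funext hb
        rw [h2, collapse_right v₀' hK.chain K']
      have h1 := VZ_le (pushChain_alt p ha) hβb
      have h2 := VZ_le (pushChain_alt p' ha) hβ'b
      have hnorm : normZ (pushChain p α) + normZ (pushChain p' α) ≤ normZ α := by
        rw [normZ_eq, normZ_eq, normZ_eq, ← add_div,
          div_le_div_iff_of_pos_right
            (by exact_mod_cast Nat.factorial_pos (e + 3) : (0 : ℝ) < (Nat.factorial (e + 3) : ℝ))]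
        have hle1 := sum_abs_pushChain_le p ha
        have hle2 := sum_abs_pushChain_le p' ha
        set T : Finset (Fin (e + 3) → V ⊕ V') :=
          Finset.univ.filter (fun g => Function.Injective (p ∘ g)) with hT
        set T' : Finset (Fin (e + 3) → V ⊕ V') :=
          Finset.univ.filter (fun g => Function.Injective (p' ∘ g)) with hT'
        have hdisj : Disjoint T T' := by
          rw [Finset.disjoint_left]
          intro g hg hg'
          rw [hT, Finset.mem_filter] at hg
          rw [hT', Finset.mem_filter] at hg'
          have hinj := hg.2
          have hinj' := hg'.2
          have hL : ∀ (i j : Fin (e + 3)) (x y : V), i ≠ j →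
              g i = Sum.inl x → g j = Sum.inl y → False := by
            intro i j x y hne hgi hgj
            apply hne
            apply hinj'
            show p' (g i) = p' (g j)
            rw [hgi, hgj, hp']
            rfl
          have hR : ∀ (i j : Fin (e + 3)) (x y : V'), i ≠ j →
              g i = Sum.inr x → g j = Sum.inr y → False := by
            intro i j x y hne hgi hgj
            apply hne
            apply hinj
            show p (g i) = p (g j)
            rw [hgi, hgj, hp]
            rfl
          have h01 : (⟨0, by omega⟩ : Fin (e + 3)) ≠ ⟨1, by omega⟩ := by simp [Fin.ext_iff]
          have h02 : (⟨0, by omega⟩ : Fin (e + 3)) ≠ ⟨2, by omega⟩ := by simp [Fin.ext_iff]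
          have h12 : (⟨1, by omega⟩ : Fin (e + 3)) ≠ ⟨2, by omega⟩ := by simp [Fin.ext_iff]
          rcases hx0 : g ⟨0, by omega⟩ with x0 | y0 <;>
            rcases hx1 : g ⟨1, by omega⟩ with x1 | y1 <;>
              rcases hx2 : g ⟨2, by omega⟩ with x2 | y2
          · exact hL _ _ _ _ h01 hx0 hx1
          · exact hL _ _ _ _ h01 hx0 hx1
          · exact hL _ _ _ _ h02 hx0 hx2
          · exact hR _ _ _ _ h12 hx1 hx2
          · exact hL _ _ _ _ h12 hx1 hx2
          · exact hR _ _ _ _ h02 hx0 hx2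
          · exact hR _ _ _ _ h01 hx0 hx1
          · exact hR _ _ _ _ h01 hx0 hx1
        have hZ : (∑ f : Fin (e + 3) → V, |pushChain p α f|) +
            (∑ f : Fin (e + 3) → V', |pushChain p' α f|) ≤
            ∑ g : Fin (e + 3) → V ⊕ V', |α g| := by
          refine (add_le_add hle1 hle2).trans ?_
          rw [← Finset.sum_union hdisj]
          exact Finset.sum_le_sum_of_subset_of_nonneg (Finset.subset_univ _)
            (fun _ _ _ => abs_nonneg _)
        exact_mod_cast hZ
      linarith
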